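/- arXiv:math/0606757 — 3 statements merged into one kernel-verified Lean document; each statement's English description precedes it below -/
import Mathlib

section
/- Let A(α,z,u,w) be the 5×5 Hermitian matrix with rows (α, z, u, w, 0), (z̄, α, w̄, −ū, 0), (ū, w, −α, z, 0), (w̄, −u, z̄, −α, z), (0, 0, 0, z̄, 0), where α ∈ ℝ and z, u, w ∈ ℂ. Then A(α,z,u,w) has rank at least 4 unless α = 0, z = 0, u = 0 and w = 0. -/
/-- The 7-parameter family of 5×5 Hermitian matrices from the paper's final remark. -/
def paperMatrix (α : ℝ) (z u w : ℂ) : Matrix (Fin 5) (Fin 5) ℂ :=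
  !![(α : ℂ), z, u, w, 0;
     star z, (α : ℂ), star w, -star u, 0;
     star u, w, -(α : ℂ), z, 0;
     star w, -u, star z, -(α : ℂ), z;
     0, 0, 0, star z, 0]

lemma aux_rank_submatrix_le (A : Matrix (Fin 5) (Fin 5) ℂ) (f g : Fin 4 → Fin 5) :
    (A.submatrix f g).rank ≤ A.rank := by
  have h1 : A.submatrix f g =
      ((1 : Matrix (Fin 5) (Fin 5) ℂ).submatrix f (Equiv.refl (Fin 5))) * A *
        ((1 : Matrix (Fin 5) (Fin 5) ℂ).submatrix (Equiv.refl (Fin 5)) g) := by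
    rw [Matrix.mul_submatrix_one, Matrix.one_submatrix_mul, Matrix.submatrix_submatrix]
    rfl
  rw [h1]
  exact le_trans (Matrix.rank_mul_le_left _ _) (Matrix.rank_mul_le_right _ _)

lemma aux_rank_ge_four (A : Matrix (Fin 5) (Fin 5) ℂ) (f g : Fin 4 → Fin 5)
    (h : (A.submatrix f g).det ≠ 0) : 4 ≤ A.rank := by
  have hU : IsUnit (A.submatrix f g) :=
    (Matrix.isUnit_iff_isUnit_det _).mpr (isUnit_iff_ne_zero.mpr h)
  have h4 : (A.submatrix f g).rank = 4 := by
    rw [Matrix.rank_of_isUnit _ hU, Fintype.card_fin]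
  calc (4 : ℕ) = (A.submatrix f g).rank := h4.symm
    _ ≤ A.rank := aux_rank_submatrix_le A f g

lemma aux_sum_sq_ne (α : ℝ) (u : ℂ) (h : ¬(α = 0 ∧ u = 0)) :
    (α : ℂ) ^ 2 + u * star u ≠ 0 := by
  have : (α : ℂ) ^ 2 + u * star u = ((α ^ 2 + Complex.normSq u : ℝ) : ℂ) := by
    rw [show star u = (starRingEnd ℂ) u from rfl, Complex.mul_conj]
    push_cast
    ring
  rw [this]
  rw [Ne, Complex.ofReal_eq_zero]
  intro h0
  have h1 : α ^ 2 = 0 ∧ Complex.normSq u = 0 := by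
    constructor <;> nlinarith [sq_nonneg α, Complex.normSq_nonneg u]
  exact h ⟨by nlinarith [h1.1], Complex.normSq_eq_zero.mp h1.2⟩

lemma aux_sum_sq3_ne (α : ℝ) (u w : ℂ) (h : ¬(α = 0 ∧ u = 0 ∧ w = 0)) :
    (α : ℂ) ^ 2 + u * star u + w * star w ≠ 0 := by
  have : (α : ℂ) ^ 2 + u * star u + w * star w
      = ((α ^ 2 + Complex.normSq u + Complex.normSq w : ℝ) : ℂ) := by
    rw [show star u = (starRingEnd ℂ) u from rfl, show star w = (starRingEnd ℂ) w from rfl,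
      Complex.mul_conj, Complex.mul_conj]
    push_cast
    ring
  rw [this, Ne, Complex.ofReal_eq_zero]
  intro h0
  have h1 : α ^ 2 = 0 ∧ Complex.normSq u = 0 ∧ Complex.normSq w = 0 := by
    refine ⟨?_, ?_, ?_⟩ <;>
      nlinarith [sq_nonneg α, Complex.normSq_nonneg u, Complex.normSq_nonneg w]
  exact h ⟨by nlinarith [h1.1], Complex.normSq_eq_zero.mp h1.2.1,
    Complex.normSq_eq_zero.mp h1.2.2⟩

/-- If `(α, z, u, w) ≠ (0,0,0,0)` then `A(α,z,u,w)` has rank at least `4`. -/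
theorem paperMatrix_rank_ge_four (α : ℝ) (z u w : ℂ)
    (h : ¬(α = 0 ∧ z = 0 ∧ u = 0 ∧ w = 0)) :
    4 ≤ (paperMatrix α z u w).rank := by
  by_cases hz : z = 0
  · subst hz
    refine aux_rank_ge_four _ ![0, 1, 2, 3] ![0, 1, 2, 3] ?_
    have hdet : ((paperMatrix α 0 u w).submatrix ![0, 1, 2, 3] ![0, 1, 2, 3]).det
        = ((α : ℂ) ^ 2 + u * star u + w * star w) ^ 2 := by
      simp only [Matrix.det_succ_row_zero, Fin.sum_univ_succ, Matrix.submatrix_apply, Fin.succAbove_zero, Fin.succ_succAbove_zero, Fin.succ_succAbove_succ, Fin.one_succAbove_zero, Fin.one_succAbove_one, Fin.succ_succAbove_one, Fin.zero_succAbove, Fin.succ_zero_eq_one, Fin.succ_one_eq_two, Matrix.det_unique, Fin.default_eq_zero, Fin.sum_univ_zero]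
      simp +decide [paperMatrix, Fin.succAbove]
      ring
    rw [hdet]
    exact pow_ne_zero _ (aux_sum_sq3_ne α u w (by tauto))
  · by_cases hau : α = 0 ∧ u = 0
    · obtain ⟨ha, hu⟩ := hau
      subst ha hu
      by_cases hw : w = 0
      · subst hw
        refine aux_rank_ge_four _ ![0, 1, 3, 4] ![0, 1, 3, 4] ?_
        have hdet : ((paperMatrix 0 z 0 0).submatrix ![0, 1, 3, 4] ![0, 1, 3, 4]).det
            = z * star z * (z * star z) := by
          simp only [Matrix.det_succ_row_zero, Fin.sum_univ_succ, Matrix.submatrix_apply, Fin.succAbove_zero, Fin.succ_succAbove_zero, Fin.succ_succAbove_succ, Fin.one_succAbove_zero, Fin.one_succAbove_one, Fin.succ_succAbove_one, Fin.zero_succAbove, Fin.succ_zero_eq_one, Fin.succ_one_eq_two, Matrix.det_unique, Fin.default_eq_zero, Fin.sum_univ_zero]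
          simp +decide [paperMatrix, Fin.succAbove]
          ring
        rw [hdet]
        exact mul_ne_zero (mul_ne_zero hz (star_ne_zero.mpr hz))
          (mul_ne_zero hz (star_ne_zero.mpr hz))
      · refine aux_rank_ge_four _ ![1, 2, 3, 4] ![1, 2, 3, 4] ?_
        have hdet : ((paperMatrix 0 z 0 w).submatrix ![1, 2, 3, 4] ![1, 2, 3, 4]).det
            = z * star z * (w * star w) := by
          simp only [Matrix.det_succ_row_zero, Fin.sum_univ_succ, Matrix.submatrix_apply, Fin.succAbove_zero, Fin.succ_succAbove_zero, Fin.succ_succAbove_succ, Fin.one_succAbove_zero, Fin.one_succAbove_one, Fin.succ_succAbove_one, Fin.zero_succAbove, Fin.succ_zero_eq_one, Fin.succ_one_eq_two, Matrix.det_unique, Fin.default_eq_zero, Fin.sum_univ_zero]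
          simp +decide [paperMatrix, Fin.succAbove]
          ring
        rw [hdet]
        exact mul_ne_zero (mul_ne_zero hz (star_ne_zero.mpr hz))
          (mul_ne_zero hw (star_ne_zero.mpr hw))
    · refine aux_rank_ge_four _ ![0, 2, 3, 4] ![0, 2, 3, 4] ?_
      have hdet : ((paperMatrix α z u w).submatrix ![0, 2, 3, 4] ![0, 2, 3, 4]).det
          = z * star z * ((α : ℂ) ^ 2 + u * star u) := by
        simp only [Matrix.det_succ_row_zero, Fin.sum_univ_succ, Matrix.submatrix_apply, Fin.succAbove_zero, Fin.succ_succAbove_zero, Fin.succ_succAbove_succ, Fin.one_succAbove_zero, Fin.one_succAbove_one, Fin.succ_succAbove_one, Fin.zero_succAbove, Fin.succ_zero_eq_one, Fin.succ_one_eq_two, Matrix.det_unique, Fin.default_eq_zero, Fin.sum_univ_zero]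
        simp +decide [paperMatrix, Fin.succAbove]
        ring
      rw [hdet]
      exact mul_ne_zero (mul_ne_zero hz (star_ne_zero.mpr hz)) (aux_sum_sq_ne α u hau)
end

section
/- In the polynomial ring 𝔽₂[c₁, c₂, c₃], working modulo 2, the fifth power of the power series 1 + c₁t + c₂t² + c₃t³ (truncated in degree ≤ 6 in t) equals 1 + c₁t + c₂t² + c₃t³ + c₁⁴t⁴ + c₁⁵t⁵ + c₁⁴c₂t⁶. -/
/-!
In characteristic 2 the Frobenius is additive, so
`P⁴ = 1 + c₁⁴t⁴ + c₂⁴t⁸ + c₃⁴t¹²` for `P = 1 + c₁t + c₂t² + c₃t³`. Hence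
`P⁵ = P⁴ P ≡ (1 + c₁⁴t⁴) P (mod t⁷)`, and expanding the last product gives the claim.
-/

open PowerSeries MvPolynomial

variable {R : Type*}

instance PowerSeries.instCharP [CommSemiring R] (p : ℕ) [CharP R p] : CharP R⟦X⟧ p :=
  charP_of_injective_algebraMap PowerSeries.C_injective p

lemma PowerSeries.trunc_eq_of_eq_add_X_pow_mul [CommSemiring R] {n : ℕ} {f : R⟦X⟧}
    {p : Polynomial R} (hp : p.natDegree < n) (g : R⟦X⟧) (h : f = (p : R⟦X⟧) + X ^ n * g) :
    trunc n f = p := by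
  rw [h, map_add, trunc_X_pow_self_mul, add_zero, trunc_coe_eq_self hp]

theorem PowerSeries.trunc_seven_pow_five_of_charTwo [CommSemiring R] [CharP R 2] (a b c : R) :
    trunc 7 ((1 + C a * X + C b * X ^ 2 + C c * X ^ 3) ^ 5) =
      Polynomial.C 1 + Polynomial.C a * Polynomial.X + Polynomial.C b * Polynomial.X ^ 2 +
        Polynomial.C c * Polynomial.X ^ 3 + Polynomial.C (a ^ 4) * Polynomial.X ^ 4 +
        Polynomial.C (a ^ 5) * Polynomial.X ^ 5 + Polynomial.C (a ^ 4 * b) * Polynomial.X ^ 6 := by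
  refine trunc_eq_of_eq_add_X_pow_mul (by compute_degree!)
    (C a ^ 4 * C c + X * (C b ^ 4 + C c ^ 4 * X ^ 4) * (1 + C a * X + C b * X ^ 2 + C c * X ^ 3)) ?_
  rw [pow_succ, show 4 = 2 ^ 2 from rfl, add_pow_char_pow, add_pow_char_pow, add_pow_char_pow]
  push_cast
  simp only [map_pow, map_mul, map_one]
  ring

/-- Mod 2, `(1 + c₁t + c₂t² + c₃t³)⁵` truncated in degree ≤ 6 equals
`1 + c₁t + c₂t² + c₃t³ + c₁⁴t⁴ + c₁⁵t⁵ + c₁⁴c₂t⁶`. -/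
theorem chern_S5_mod_two :
    letI R := MvPolynomial (Fin 3) (ZMod 2)
    letI c₁ : R := MvPolynomial.X 0
    letI c₂ : R := MvPolynomial.X 1
    letI c₃ : R := MvPolynomial.X 2
    PowerSeries.trunc 7
      ((1 + PowerSeries.C c₁ * PowerSeries.X +
          PowerSeries.C c₂ * PowerSeries.X ^ 2 +
          PowerSeries.C c₃ * PowerSeries.X ^ 3) ^ 5) =
      Polynomial.C 1 + Polynomial.C c₁ * Polynomial.X +
        Polynomial.C c₂ * Polynomial.X ^ 2 +
        Polynomial.C c₃ * Polynomial.X ^ 3 +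
        Polynomial.C (c₁ ^ 4) * Polynomial.X ^ 4 +
        Polynomial.C (c₁ ^ 5) * Polynomial.X ^ 5 +
        Polynomial.C (c₁ ^ 4 * c₂) * Polynomial.X ^ 6 :=
  trunc_seven_pow_five_of_charTwo _ _ _
end

section
/- In the ring R = 𝔽₂[c₁, c₂]/(c₁c₂², c₁⁴ + c₁²c₂ + c₂²), the element c₁²c₂² is zero, while c₁⁶, c₁⁴c₂ and c₁²c₂² + c₂³ give the following: every monomial of total degree 6 in c₁, c₂ (with deg c₁ = 1, deg c₂ = 2) other than c₁²c₂² is nonzero, and all such nonzero degree-6 monomials are equal in R. -/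
open MvPolynomial Finsupp


private lemma phi_killed (u v : MvPolynomial (Fin 2) (ZMod 2)) :
    coeff (Finsupp.single 0 6) (u * (X 0 * X 1 ^ 2) + v * (X 0 ^ 4 + X 0 ^ 2 * X 1 + X 1 ^ 2)) +
    coeff (Finsupp.single 0 4 + Finsupp.single 1 1) (u * (X 0 * X 1 ^ 2) + v * (X 0 ^ 4 + X 0 ^ 2 * X 1 + X 1 ^ 2)) +
    coeff (Finsupp.single 1 3) (u * (X 0 * X 1 ^ 2) + v * (X 0 ^ 4 + X 0 ^ 2 * X 1 + X 1 ^ 2)) = 0 := by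
  have hg1 : (X 0 : MvPolynomial (Fin 2) (ZMod 2)) * X 1 ^ 2
      = monomial (Finsupp.single 0 1 + Finsupp.single 1 2) 1 := by
    rw [monomial_single_add, X_pow_eq_monomial, pow_one]
  have hX1 : (X 1 : MvPolynomial (Fin 2) (ZMod 2)) = monomial (Finsupp.single 1 1) 1 := by
    rw [← pow_one (X 1), X_pow_eq_monomial]
  have hd2 : (X 0 : MvPolynomial (Fin 2) (ZMod 2)) ^ 2 * X 1
      = monomial (Finsupp.single 0 2 + Finsupp.single 1 1) 1 := by
    rw [monomial_single_add, hX1]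
  have hA1 : Finsupp.single (0 : Fin 2) 6 - Finsupp.single 0 4 = Finsupp.single 0 2 := by
    ext i; fin_cases i <;> simp [Finsupp.single_apply]
  have hB1 : (Finsupp.single (0 : Fin 2) 4 + Finsupp.single 1 1) - Finsupp.single 0 4
      = Finsupp.single 1 1 := by
    ext i; fin_cases i <;> simp [Finsupp.single_apply]
  have hB2 : (Finsupp.single (0 : Fin 2) 4 + Finsupp.single 1 1)
      - (Finsupp.single 0 2 + Finsupp.single 1 1) = Finsupp.single 0 2 := by
    ext i; fin_cases i <;> simp [Finsupp.single_apply]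
  have hC3 : Finsupp.single (1 : Fin 2) 3 - Finsupp.single 1 2 = Finsupp.single 1 1 := by
    ext i; fin_cases i <;> simp [Finsupp.single_apply]
  have hn1 : ¬ (Finsupp.single (0:Fin 2) 1 + Finsupp.single 1 2 ≤ Finsupp.single 0 6) := by
    simp [Finsupp.le_def, Finsupp.single_apply, Fin.forall_fin_two]
  have hn2 : ¬ (Finsupp.single (0:Fin 2) 1 + Finsupp.single 1 2
      ≤ Finsupp.single 0 4 + Finsupp.single 1 1) := by
    simp [Finsupp.le_def, Finsupp.single_apply, Fin.forall_fin_two]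
  have hn3 : ¬ (Finsupp.single (0:Fin 2) 1 + Finsupp.single 1 2 ≤ Finsupp.single 1 3) := by
    simp [Finsupp.le_def, Finsupp.single_apply, Fin.forall_fin_two]
  have hp4 : Finsupp.single (0:Fin 2) 4 ≤ Finsupp.single 0 6 := by
    simp [Finsupp.le_def, Finsupp.single_apply, Fin.forall_fin_two]
  have hp5 : Finsupp.single (0:Fin 2) 4 ≤ Finsupp.single 0 4 + Finsupp.single 1 1 := by
    simp [Finsupp.le_def, Finsupp.single_apply, Fin.forall_fin_two]
  have hn6 : ¬ (Finsupp.single (0:Fin 2) 4 ≤ Finsupp.single 1 3) := by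
    simp [Finsupp.le_def, Finsupp.single_apply, Fin.forall_fin_two]
  have hn7 : ¬ (Finsupp.single (0:Fin 2) 2 + Finsupp.single 1 1 ≤ Finsupp.single 0 6) := by
    simp [Finsupp.le_def, Finsupp.single_apply, Fin.forall_fin_two]
  have hp8 : Finsupp.single (0:Fin 2) 2 + Finsupp.single 1 1
      ≤ Finsupp.single 0 4 + Finsupp.single 1 1 := by
    simp [Finsupp.le_def, Finsupp.single_apply, Fin.forall_fin_two]
  have hn9 : ¬ (Finsupp.single (0:Fin 2) 2 + Finsupp.single 1 1 ≤ Finsupp.single 1 3) := by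
    simp [Finsupp.le_def, Finsupp.single_apply, Fin.forall_fin_two]
  have hn10 : ¬ (Finsupp.single (1:Fin 2) 2 ≤ Finsupp.single 0 6) := by
    simp [Finsupp.le_def, Finsupp.single_apply, Fin.forall_fin_two]
  have hn11 : ¬ (Finsupp.single (1:Fin 2) 2 ≤ Finsupp.single 0 4 + Finsupp.single 1 1) := by
    simp [Finsupp.le_def, Finsupp.single_apply, Fin.forall_fin_two]
  have hp12 : Finsupp.single (1:Fin 2) 2 ≤ Finsupp.single 1 3 := by
    simp [Finsupp.le_def, Finsupp.single_apply, Fin.forall_fin_two]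
  rw [hg1, hd2]
  simp only [X_pow_eq_monomial, mul_add, coeff_add, coeff_mul_monomial',
    hn1, hn2, hn3, hn6, hn7, hn9, hn10, hn11, hp4, hp5, hp8, hp12,
    if_true, if_false, ite_true, ite_false, if_pos, if_neg, not_false_iff,
    hA1, hB1, hB2, hC3, mul_one, add_zero, zero_add]
  ring_nf
  simp [CharTwo.two_eq_zero]


private lemma coeff_X0_six :
    coeff (Finsupp.single 0 6) ((X 0 : MvPolynomial (Fin 2) (ZMod 2)) ^ 6) +
    coeff (Finsupp.single 0 4 + Finsupp.single 1 1) ((X 0 : MvPolynomial (Fin 2) (ZMod 2)) ^ 6) +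
    coeff (Finsupp.single 1 3) ((X 0 : MvPolynomial (Fin 2) (ZMod 2)) ^ 6) = 1 := by
  have h1 : (Finsupp.single (0:Fin 2) 6) ≠ Finsupp.single 0 4 + Finsupp.single 1 1 := by
    intro h
    have := DFunLike.congr_fun h 1
    simp [Finsupp.single_apply] at this
  have h2 : (Finsupp.single (0:Fin 2) 6) ≠ Finsupp.single 1 3 := by
    intro h
    have := DFunLike.congr_fun h 1
    simp [Finsupp.single_apply] at this
  rw [coeff_X_pow, coeff_X_pow, coeff_X_pow, if_pos rfl, if_neg h1, if_neg h2]
  norm_num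

private lemma two_poly_zero : (2 : MvPolynomial (Fin 2) (ZMod 2)) = 0 :=
  CharTwo.two_eq_zero

/-- In `𝔽₂[c₁,c₂]/(c₁c₂², c₁⁴ + c₁²c₂ + c₂²)` one has `c₁²c₂² = 0` while
`c₁⁶ = c₁⁴c₂ = c₂³ ≠ 0`. -/
theorem degree_six_monomials_in_quotient :
    letI c₁ : MvPolynomial (Fin 2) (ZMod 2) := MvPolynomial.X 0
    letI c₂ : MvPolynomial (Fin 2) (ZMod 2) := MvPolynomial.X 1
    letI I : Ideal (MvPolynomial (Fin 2) (ZMod 2)) :=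
      Ideal.span {c₁ * c₂ ^ 2, c₁ ^ 4 + c₁ ^ 2 * c₂ + c₂ ^ 2}
    letI π := Ideal.Quotient.mk I
    π (c₁ ^ 2 * c₂ ^ 2) = 0 ∧
    π (c₁ ^ 6) = π (c₁ ^ 4 * c₂) ∧
    π (c₁ ^ 4 * c₂) = π (c₂ ^ 3) ∧
    π (c₁ ^ 6) ≠ 0 := by
  set c₁ : MvPolynomial (Fin 2) (ZMod 2) := MvPolynomial.X 0 with hc₁
  set c₂ : MvPolynomial (Fin 2) (ZMod 2) := MvPolynomial.X 1 with hc₂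
  set I : Ideal (MvPolynomial (Fin 2) (ZMod 2)) :=
    Ideal.span {c₁ * c₂ ^ 2, c₁ ^ 4 + c₁ ^ 2 * c₂ + c₂ ^ 2} with hI
  refine ⟨?_, ?_, ?_, ?_⟩
  · rw [Ideal.Quotient.eq_zero_iff_mem, hI, Ideal.mem_span_pair]
    exact ⟨c₁, 0, by ring⟩
  · rw [Ideal.Quotient.eq, hI, Ideal.mem_span_pair]
    refine ⟨c₁, c₁ ^ 2, ?_⟩
    linear_combination (c₁ ^ 4 * c₂ + c₁ ^ 2 * c₂ ^ 2) * two_poly_zero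
  · rw [Ideal.Quotient.eq, hI, Ideal.mem_span_pair]
    refine ⟨c₁, c₂, ?_⟩
    linear_combination (c₁ ^ 2 * c₂ ^ 2 + c₂ ^ 3) * two_poly_zero
  · intro h
    rw [Ideal.Quotient.eq_zero_iff_mem, hI, Ideal.mem_span_pair] at h
    obtain ⟨u, v, huv⟩ := h
    have := congrArg (fun p : MvPolynomial (Fin 2) (ZMod 2) =>
      coeff (Finsupp.single 0 6) p + coeff (Finsupp.single 0 4 + Finsupp.single 1 1) p +
        coeff (Finsupp.single 1 3) p) huv
    beta_reduce at this
    rw [phi_killed, coeff_X0_six] at this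
    exact one_ne_zero this.symm
end
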